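/- arXiv:1804.05678 — 2 statements merged into one kernel-verified Lean document; each statement's English description precedes it below -/
import Mathlib

section
/- Let H be a real Hilbert space, T : H → H bounded self-adjoint positive semidefinite, α > 0, g ∈ H, and φ : H → ℝ convex continuous. Let ū minimize J₀(u) = ½⟨(T+αI)u, u⟩ + ⟨g,u⟩ + φ(u), and let u_ε minimize J_ε(u) = ½⟨(T+αI)u, u⟩ + ⟨g,u⟩ + φ_ε(u), where φ_ε is convex continuous and satisfies 0 ≤ φ_ε(u) - φ(u) ≤ C·ε for all u (with constant C > 0). Then α‖ū - u_ε‖² ≤ C·ε. -/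
/-!
Both minimizers satisfy the first-order variational inequality
`0 ≤ ⟪A u + g, v - u⟫ + φ v - φ u` of a quadratic-plus-convex functional, with `A = T + α I`.
Testing the inequality for `ū` with `v = u_ε` and the one for `u_ε` with `v = ū` and adding them,
the linear terms cancel and leave
`⟪A (ū - u_ε), ū - u_ε⟫ ≤ (φ_ε ū - φ ū) - (φ_ε u_ε - φ u_ε) ≤ C ε`,
while `⟪A w, w⟫ ≥ α ‖w‖²` because `T` is positive semidefinite.
-/

open InnerProductSpace Set

section QuadraticPlusConvex

variable {H : Type*} [NormedAddCommGroup H] [InnerProductSpace ℝ H] {A : H →ₗ[ℝ] H}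

theorem LinearMap.IsSymmetric.inner_map_add_smul_self (hA : A.IsSymmetric) (u d : H) (t : ℝ) :
    ⟪A (u + t • d), u + t • d⟫_ℝ = ⟪A u, u⟫_ℝ + 2 * t * ⟪A u, d⟫_ℝ + t ^ 2 * ⟪A d, d⟫_ℝ := by
  have hsym : ⟪A d, u⟫_ℝ = ⟪A u, d⟫_ℝ := by rw [hA d u, real_inner_comm]
  simp only [map_add, map_smul, inner_add_left, inner_add_right, real_inner_smul_left,
    real_inner_smul_right, hsym]
  ring

theorem nonneg_of_forall_mem_Ioc_nonneg_add_mul {L Q : ℝ}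
    (h : ∀ t ∈ Ioc (0 : ℝ) 1, 0 ≤ L + t * Q) : 0 ≤ L := by
  have hclosed : IsClosed {t : ℝ | 0 ≤ L + t * Q} := isClosed_le continuous_const (by fun_prop)
  have hsub := hclosed.closure_subset_iff.mpr h
  rw [closure_Ioc zero_ne_one] at hsub
  simpa using hsub (left_mem_Icc.mpr zero_le_one)

theorem variational_inequality_of_isMinOn (hA : A.IsSymmetric) {g : H} {φ : H → ℝ}
    (hφ : ConvexOn ℝ univ φ) {u : H}
    (hu : IsMinOn (fun w => (1 / 2) * ⟪A w, w⟫_ℝ + ⟪g, w⟫_ℝ + φ w) univ u) (v : H) :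
    0 ≤ ⟪A u + g, v - u⟫_ℝ + (φ v - φ u) := by
  set d := v - u
  refine nonneg_of_forall_mem_Ioc_nonneg_add_mul (Q := (1 / 2) * ⟪A d, d⟫_ℝ)
    fun t ⟨ht0, ht1⟩ => ?_
  have hφt : φ (u + t • d) ≤ (1 - t) * φ u + t * φ v := by
    have : u + t • d = (1 - t) • u + t • v := by simp only [d]; module
    rw [this]
    exact hφ.2 (mem_univ u) (mem_univ v) (by linarith) ht0.le (by ring)
  have hmin := isMinOn_univ_iff.mp hu (u + t • d)
  simp only [hA.inner_map_add_smul_self, inner_add_right, real_inner_smul_right] at hmin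
  rw [inner_add_left]
  refine (mul_nonneg_iff_of_pos_left ht0).mp ?_
  nlinarith

theorem inner_map_sub_sub_le_of_isMinOn (hA : A.IsSymmetric) {g : H} {φ₁ φ₂ : H → ℝ}
    (hφ₁ : ConvexOn ℝ univ φ₁) (hφ₂ : ConvexOn ℝ univ φ₂) {u₁ u₂ : H}
    (hu₁ : IsMinOn (fun w => (1 / 2) * ⟪A w, w⟫_ℝ + ⟪g, w⟫_ℝ + φ₁ w) univ u₁)
    (hu₂ : IsMinOn (fun w => (1 / 2) * ⟪A w, w⟫_ℝ + ⟪g, w⟫_ℝ + φ₂ w) univ u₂) :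
    ⟪A (u₁ - u₂), u₁ - u₂⟫_ℝ ≤ (φ₂ u₁ - φ₁ u₁) - (φ₂ u₂ - φ₁ u₂) := by
  have h₁ := variational_inequality_of_isMinOn hA hφ₁ hu₁ u₂
  have h₂ := variational_inequality_of_isMinOn hA hφ₂ hu₂ u₁
  have hsum : ⟪A u₁ + g, u₂ - u₁⟫_ℝ + ⟪A u₂ + g, u₁ - u₂⟫_ℝ = -⟪A (u₁ - u₂), u₁ - u₂⟫_ℝ := by
    simp only [map_sub, inner_sub_left, inner_sub_right, inner_add_left]
    ring
  linarith

end QuadraticPlusConvex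

theorem regularization_error_bound_general
    {H : Type*} [NormedAddCommGroup H] [InnerProductSpace ℝ H]
    (T : H →L[ℝ] H) (hT_sa : ∀ u v : H, ⟪T u, v⟫_ℝ = ⟪u, T v⟫_ℝ)
    (hT_pos : ∀ u : H, 0 ≤ ⟪T u, u⟫_ℝ)
    (α : ℝ) (g : H)
    (φ φε : H → ℝ) (hφ_conv : ConvexOn ℝ Set.univ φ)
    (hφε_conv : ConvexOn ℝ Set.univ φε)
    (C ε : ℝ)
    (hdiff : ∀ u : H, 0 ≤ φε u - φ u ∧ φε u - φ u ≤ C * ε)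
    (J₀ Jε : H → ℝ)
    (hJ₀ : ∀ u : H, J₀ u = (1 / 2) * (⟪T u, u⟫_ℝ + α * ⟪u, u⟫_ℝ) + ⟪g, u⟫_ℝ + φ u)
    (hJε : ∀ u : H, Jε u = (1 / 2) * (⟪T u, u⟫_ℝ + α * ⟪u, u⟫_ℝ) + ⟪g, u⟫_ℝ + φε u)
    (ubar uε : H) (hubar : IsMinOn J₀ Set.univ ubar) (huε : IsMinOn Jε Set.univ uε) :
    α * ‖ubar - uε‖ ^ 2 ≤ C * ε := by
  set A : H →ₗ[ℝ] H := T.toLinearMap + α • LinearMap.id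
  have hA_apply (u : H) : ⟪A u, u⟫_ℝ = ⟪T u, u⟫_ℝ + α * ⟪u, u⟫_ℝ := by
    simp [A, inner_add_left, real_inner_smul_left]
  have hA : A.IsSymmetric := fun u v => by
    simp [A, inner_add_left, inner_add_right, real_inner_smul_left, real_inner_smul_right, hT_sa]
  have hJ₀A : J₀ = fun u => (1 / 2) * ⟪A u, u⟫_ℝ + ⟪g, u⟫_ℝ + φ u :=
    funext fun u => by rw [hJ₀, hA_apply]
  have hJεA : Jε = fun u => (1 / 2) * ⟪A u, u⟫_ℝ + ⟪g, u⟫_ℝ + φε u :=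
    funext fun u => by rw [hJε, hA_apply]
  have hstab := inner_map_sub_sub_le_of_isMinOn hA hφ_conv hφε_conv (hJ₀A ▸ hubar) (hJεA ▸ huε)
  rw [hA_apply, real_inner_self_eq_norm_sq] at hstab
  linarith [hT_pos (ubar - uε), hdiff ubar, hdiff uε]

theorem regularization_error_bound
    {H : Type*} [NormedAddCommGroup H] [InnerProductSpace ℝ H] [CompleteSpace H]
    (T : H →L[ℝ] H) (hT_sa : ∀ u v : H, ⟪T u, v⟫_ℝ = ⟪u, T v⟫_ℝ)
    (hT_pos : ∀ u : H, 0 ≤ ⟪T u, u⟫_ℝ)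
    (α : ℝ) (hα : 0 < α) (g : H)
    (φ φε : H → ℝ) (hφ_conv : ConvexOn ℝ Set.univ φ) (hφ_cont : Continuous φ)
    (hφε_conv : ConvexOn ℝ Set.univ φε) (hφε_cont : Continuous φε)
    (C ε : ℝ) (hC : 0 < C) (hε : 0 < ε)
    (hdiff : ∀ u : H, 0 ≤ φε u - φ u ∧ φε u - φ u ≤ C * ε)
    (J₀ Jε : H → ℝ)
    (hJ₀ : ∀ u : H, J₀ u = (1 / 2) * (⟪T u, u⟫_ℝ + α * ⟪u, u⟫_ℝ) + ⟪g, u⟫_ℝ + φ u)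
    (hJε : ∀ u : H, Jε u = (1 / 2) * (⟪T u, u⟫_ℝ + α * ⟪u, u⟫_ℝ) + ⟪g, u⟫_ℝ + φε u)
    (ubar uε : H) (hubar : IsMinOn J₀ Set.univ ubar) (huε : IsMinOn Jε Set.univ uε) :
    α * ‖ubar - uε‖ ^ 2 ≤ C * ε :=
  regularization_error_bound_general T hT_sa hT_pos α g φ φε hφ_conv hφε_conv C ε hdiff J₀ Jε hJ₀
    hJε ubar uε hubar huε
end

section
/- For real λ ≥ 0 and α > 0, and for the diagonal case: if the self-adjoint operator S = (D + UΛU*)⁻¹ with D ⪰ αI, Λ = diag(λᵢ) with λᵢ ≥ 0 and U* U = I, then S ⪯ D⁻¹ - D⁻¹ U diag(αλᵢ/(λᵢ+α)) U* D⁻¹. In the scalar version: for any d ≥ α > 0 and λ ≥ 0, (d + λ)⁻¹ ≤ d⁻¹ - d⁻² · αλ/(λ + α). -/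
/-!
Write `y = S x` and `z = D⁻¹ x`, so that `D z = x = D y + Σ λᵢ ⟪uᵢ, y⟫ uᵢ`. With `w = z - y`,
symmetry of `D` gives `⟪z, x⟫ - ⟪y, x⟫ = ⟪D w, y⟫ + ⟪D w, w⟫ = Σ λᵢ bᵢ² + ⟪D w, w⟫`, where
`bᵢ = ⟪uᵢ, y⟫`, and coercivity with Bessel's inequality bounds `⟪D w, w⟫ ≥ α Σ aᵢ²`, where
`aᵢ = ⟪uᵢ, w⟫`. Since `⟪uᵢ, z⟫ = aᵢ + bᵢ`, the claim reduces coordinatewise to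
`αλ/(λ+α) (a + b)² ≤ α a² + λ b²`, which is `(α a - λ b)² ≥ 0`.
-/

open InnerProductSpace

theorem mul_div_add_mul_sq_add_le {α l : ℝ} (hα : 0 ≤ α) (hl : 0 ≤ l) (a b : ℝ) :
    α * l / (l + α) * (a + b) ^ 2 ≤ α * a ^ 2 + l * b ^ 2 := by
  rcases (add_nonneg hl hα).eq_or_lt with h | h
  · rw [← h, div_zero, zero_mul]
    positivity
  · rw [div_mul_eq_mul_div, div_le_iff₀ h]
    nlinarith [sq_nonneg (α * a - l * b)]

theorem inv_add_le_inv_sub_sq_mul {α d l : ℝ} (hα : 0 < α) (hd : α ≤ d) (hl : 0 ≤ l) :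
    (d + l)⁻¹ ≤ d⁻¹ - d⁻¹ ^ 2 * (α * l / (l + α)) := by
  have hd0 : 0 < d := hα.trans_le hd
  have hgap : d⁻¹ - d⁻¹ ^ 2 * (α * l / (l + α)) - (d + l)⁻¹
      = l ^ 2 * (d - α) / (d ^ 2 * (d + l) * (l + α)) := by
    field_simp
    ring
  have hgap_nonneg : 0 ≤ l ^ 2 * (d - α) / (d ^ 2 * (d + l) * (l + α)) :=
    div_nonneg (mul_nonneg (sq_nonneg l) (sub_nonneg.2 hd)) (by positivity)
  linarith

section InnerProductSpace

variable {H : Type*} [NormedAddCommGroup H] [InnerProductSpace ℝ H] {n : Type*} [Fintype n]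

theorem Orthonormal.sum_inner_sq_le {u : n → H} (hu : Orthonormal ℝ u) (x : H) :
    ∑ i, ⟪u i, x⟫_ℝ ^ 2 ≤ ‖x‖ ^ 2 := by
  simpa only [Real.norm_eq_abs, sq_abs] using hu.sum_inner_products_le (s := Finset.univ) x

theorem inner_sum_smul_inner_self (u : n → H) (lam : n → ℝ) (y : H) :
    ⟪∑ i, (lam i * ⟪u i, y⟫_ℝ) • u i, y⟫_ℝ = ∑ i, lam i * ⟪u i, y⟫_ℝ ^ 2 := by
  simp only [sum_inner, real_inner_smul_left, mul_assoc, sq]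

theorem inner_sub_inner_eq_of_symm {D : H →L[ℝ] H} (hD : ∀ x y : H, ⟪D x, y⟫_ℝ = ⟪x, D y⟫_ℝ)
    (y z : H) : ⟪z, D z⟫_ℝ - ⟪y, D z⟫_ℝ = ⟪D (z - y), y⟫_ℝ + ⟪D (z - y), z - y⟫_ℝ := by
  rw [← inner_sub_left, ← hD, ← inner_add_right, add_sub_cancel]

/-- The vector form of `(D + UΛU*)⁻¹ ⪯ D⁻¹ - D⁻¹ U diag(αλᵢ/(λᵢ+α)) U* D⁻¹`, evaluated at
`x = D z`, for `y` the solution of `(D + UΛU*) y = x`. -/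
theorem inner_le_inner_sub_of_eq_add_lowRank {u : n → H} (hu : Orthonormal ℝ u) {lam : n → ℝ}
    (hlam : ∀ i, 0 ≤ lam i) {α : ℝ} (hα : 0 ≤ α) {D : H →L[ℝ] H}
    (hD_sa : ∀ x y : H, ⟪D x, y⟫_ℝ = ⟪x, D y⟫_ℝ)
    (hD_coercive : ∀ x : H, α * ‖x‖ ^ 2 ≤ ⟪D x, x⟫_ℝ) {y z : H}
    (h : D z = D y + ∑ i, (lam i * ⟪u i, y⟫_ℝ) • u i) :
    ⟪y, D z⟫_ℝ ≤ ⟪z, D z⟫_ℝ - ∑ i, (α * lam i / (lam i + α)) * ⟪u i, z⟫_ℝ ^ 2 := by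
  set w := z - y
  have hDw : D w = ∑ i, (lam i * ⟪u i, y⟫_ℝ) • u i := by
    rw [map_sub, h, add_sub_cancel_left]
  have hgap := inner_sub_inner_eq_of_symm hD_sa y z
  have hrank : ⟪D w, y⟫_ℝ = ∑ i, lam i * ⟪u i, y⟫_ℝ ^ 2 := by
    rw [hDw, inner_sum_smul_inner_self]
  have hcoercive : α * ∑ i, ⟪u i, w⟫_ℝ ^ 2 ≤ ⟪D w, w⟫_ℝ :=
    (mul_le_mul_of_nonneg_left (hu.sum_inner_sq_le w) hα).trans (hD_coercive w)
  have hsplit (i : n) : ⟪u i, z⟫_ℝ = ⟪u i, w⟫_ℝ + ⟪u i, y⟫_ℝ := by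
    rw [inner_sub_right, sub_add_cancel]
  have hcoord : ∑ i, (α * lam i / (lam i + α)) * ⟪u i, z⟫_ℝ ^ 2
      ≤ α * ∑ i, ⟪u i, w⟫_ℝ ^ 2 + ∑ i, lam i * ⟪u i, y⟫_ℝ ^ 2 := by
    rw [Finset.mul_sum, ← Finset.sum_add_distrib]
    gcongr with i
    rw [hsplit]
    exact mul_div_add_mul_sq_add_le hα (hlam i) _ _
  linarith

end InnerProductSpace

theorem lowrank_inverse_upper_bound_general
    {H : Type*} [NormedAddCommGroup H] [InnerProductSpace ℝ H]
    {n : Type*} [Fintype n]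
    (u : n → H) (hu : Orthonormal ℝ u)
    (lam : n → ℝ) (hlam : ∀ i, 0 ≤ lam i)
    (α : ℝ) (hα : 0 < α)
    (D D' : H →L[ℝ] H)
    (hD_sa : ∀ x y : H, ⟪D x, y⟫_ℝ = ⟪x, D y⟫_ℝ)
    (hD_coercive : ∀ x : H, α * ‖x‖ ^ 2 ≤ ⟪D x, x⟫_ℝ)
    (hDD' : D ∘L D' = ContinuousLinearMap.id ℝ H)
    (A S : H →L[ℝ] H)
    (hA : ∀ x : H, A x = D x + ∑ i, (lam i * ⟪u i, x⟫_ℝ) • u i)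
    (hAS : A ∘L S = ContinuousLinearMap.id ℝ H) :
    (∀ x : H, ⟪S x, x⟫_ℝ ≤
        ⟪D' x, x⟫_ℝ - ∑ i, (α * lam i / (lam i + α)) * ⟪u i, D' x⟫_ℝ ^ 2) ∧
    (∀ d lam₀ : ℝ, α ≤ d → 0 ≤ lam₀ →
        (d + lam₀)⁻¹ ≤ d⁻¹ - d⁻¹ ^ 2 * (α * lam₀ / (lam₀ + α))) := by
  refine ⟨fun x => ?_, fun d l hd hl => inv_add_le_inv_sub_sq_mul hα hd hl⟩
  have hDD'x : D (D' x) = x := DFunLike.congr_fun hDD' x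
  have hASx : A (S x) = x := DFunLike.congr_fun hAS x
  have hbound := inner_le_inner_sub_of_eq_add_lowRank hu hlam hα.le hD_sa hD_coercive
    (y := S x) (z := D' x) (by rw [hDD'x, ← hA, hASx])
  rwa [hDD'x] at hbound

/-- Operator upper bound on `S = (D + UΛU*)⁻¹` via Sherman–Morrison–Woodbury,
with `UΛU*` given by an orthonormal family `u i` and nonnegative eigenvalues `λ i`,
together with its scalar version. -/
theorem lowrank_inverse_upper_bound
    {H : Type*} [NormedAddCommGroup H] [InnerProductSpace ℝ H] [CompleteSpace H]
    {n : Type*} [Fintype n]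
    (u : n → H) (hu : Orthonormal ℝ u)
    (lam : n → ℝ) (hlam : ∀ i, 0 ≤ lam i)
    (α : ℝ) (hα : 0 < α)
    (D D' : H →L[ℝ] H)
    (hD_sa : ∀ x y : H, ⟪D x, y⟫_ℝ = ⟪x, D y⟫_ℝ)
    (hD_coercive : ∀ x : H, α * ‖x‖ ^ 2 ≤ ⟪D x, x⟫_ℝ)
    (hDD' : D ∘L D' = ContinuousLinearMap.id ℝ H)
    (hD'D : D' ∘L D = ContinuousLinearMap.id ℝ H)
    (A S : H →L[ℝ] H)
    (hA : ∀ x : H, A x = D x + ∑ i, (lam i * ⟪u i, x⟫_ℝ) • u i)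
    (hAS : A ∘L S = ContinuousLinearMap.id ℝ H)
    (hSA : S ∘L A = ContinuousLinearMap.id ℝ H) :
    (∀ x : H, ⟪S x, x⟫_ℝ ≤
        ⟪D' x, x⟫_ℝ - ∑ i, (α * lam i / (lam i + α)) * ⟪u i, D' x⟫_ℝ ^ 2) ∧
    (∀ d lam₀ : ℝ, α ≤ d → 0 ≤ lam₀ →
        (d + lam₀)⁻¹ ≤ d⁻¹ - d⁻¹ ^ 2 * (α * lam₀ / (lam₀ + α))) :=
  lowrank_inverse_upper_bound_general u hu lam hlam α hα D D' hD_sa hD_coercive hDD' A S hA hAS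
end
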